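/- Let X be a real Banach space. Then X is midpoint locally uniformly rotund (MLUR) if and only if for every r ∈ (0, 1) and all sequences (x_n), (y_n) in X such that ‖x_n‖ → 1, ‖y_n‖ → 1 and r·x_n + (1 − r)·y_n converges to some z ∈ X with ‖z‖ = 1, it follows that ‖x_n − y_n‖ → 0. -/

import Mathlib

/-!
For `0 < r ≤ 1/2` put `u = 2r • x + (1 - 2r) • y`. Then `(u + y)/2 = r • x + (1 - r) • y` and
`u - y = 2r • (x - y)`, so MLUR applied to `u` and `y` gives the weighted condition, once we know
`‖u‖ → 1`: this holds by the squeeze `2‖(u + y)/2‖ - ‖y‖ ≤ ‖u‖ ≤ 2r‖x‖ + (1 - 2r)‖y‖`.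
Weights in `[1/2, 1)` reduce to this case by exchanging `x` and `y`.
-/

open Filter

/-- `X` is midpoint locally uniformly rotund (MLUR). -/
def MLUR (X : Type*) [NormedAddCommGroup X] [NormedSpace ℝ X] : Prop :=
  ∀ (x y : ℕ → X) (z : X),
    Tendsto (fun n => ‖x n‖) atTop (nhds 1) →
    Tendsto (fun n => ‖y n‖) atTop (nhds 1) →
    Tendsto (fun n => (1 / 2 : ℝ) • (x n + y n)) atTop (nhds z) → ‖z‖ = 1 →
    Tendsto (fun n => ‖x n - y n‖) atTop (nhds 0)

open Topology

section

variable {X : Type*} [NormedAddCommGroup X] [NormedSpace ℝ X]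

variable (X) in
def WeightedMLUR (r : ℝ) : Prop :=
  ∀ (x y : ℕ → X) (z : X),
    Tendsto (fun n => ‖x n‖) atTop (𝓝 1) →
    Tendsto (fun n => ‖y n‖) atTop (𝓝 1) →
    Tendsto (fun n => r • x n + (1 - r) • y n) atTop (𝓝 z) → ‖z‖ = 1 →
    Tendsto (fun n => ‖x n - y n‖) atTop (𝓝 0)

theorem weightedMLUR_half_iff : WeightedMLUR X (1 / 2) ↔ MLUR X := by
  have hmid : ∀ x y : X, (1 / 2 : ℝ) • x + (1 - 1 / 2 : ℝ) • y = (1 / 2 : ℝ) • (x + y) := by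
    intro x y; module
  simp only [WeightedMLUR, MLUR, hmid]

theorem WeightedMLUR.one_sub {r : ℝ} (h : WeightedMLUR X r) : WeightedMLUR X (1 - r) := by
  intro x y z hx hy hz hz1
  have hz' : Tendsto (fun n => r • y n + (1 - r) • x n) atTop (𝓝 z) := by
    simpa only [sub_sub_cancel, add_comm] using hz
  simpa only [norm_sub_rev] using h y x z hy hx hz' hz1

theorem tendsto_norm_of_tendsto_norm_midpoint {u y : ℕ → X} {b : ℕ → ℝ}
    (hy : Tendsto (fun n => ‖y n‖) atTop (𝓝 1))
    (hmid : Tendsto (fun n => ‖(1 / 2 : ℝ) • (u n + y n)‖) atTop (𝓝 1))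
    (hub : ∀ n, ‖u n‖ ≤ b n) (hb : Tendsto b atTop (𝓝 1)) :
    Tendsto (fun n => ‖u n‖) atTop (𝓝 1) := by
  have hlow : Tendsto (fun n => 2 * ‖(1 / 2 : ℝ) • (u n + y n)‖ - ‖y n‖) atTop (𝓝 1) := by
    convert (hmid.const_mul 2).sub hy using 2
    norm_num
  refine tendsto_of_tendsto_of_tendsto_of_le_of_le hlow hb (fun n => ?_) hub
  calc 2 * ‖(1 / 2 : ℝ) • (u n + y n)‖ - ‖y n‖ = ‖u n + y n‖ - ‖y n‖ := by
        rw [norm_smul, Real.norm_of_nonneg (by norm_num)]; ring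
    _ ≤ ‖u n‖ := by linarith [norm_add_le (u n) (y n)]

theorem MLUR.weightedMLUR_of_le_half (h : MLUR X) {r : ℝ} (hr0 : 0 < r) (hr : r ≤ 1 / 2) :
    WeightedMLUR X r := by
  intro x y z hx hy hz hz1
  set u : ℕ → X := fun n => (2 * r) • x n + (1 - 2 * r) • y n
  have hmid : ∀ n, (1 / 2 : ℝ) • (u n + y n) = r • x n + (1 - r) • y n := fun n => by
    simp only [u]; module
  have hdiff : ∀ n, ‖u n - y n‖ = 2 * r * ‖x n - y n‖ := fun n => by
    rw [show u n - y n = (2 * r) • (x n - y n) by simp only [u]; module, norm_smul,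
      Real.norm_of_nonneg (by positivity)]
  have hu : Tendsto (fun n => ‖u n‖) atTop (𝓝 1) := by
    refine tendsto_norm_of_tendsto_norm_midpoint hy ?_
      (fun n => (convexOn_norm convex_univ).2 (Set.mem_univ (x n)) (Set.mem_univ (y n))
        (by positivity) (by linarith) (by ring))
      (by simpa using (hx.const_mul (2 * r)).add (hy.const_mul (1 - 2 * r)))
    simpa only [hmid, hz1] using hz.norm
  have huy := h u y z hu hy (by simpa only [hmid] using hz) hz1
  simpa only [hdiff, ← mul_assoc, inv_mul_cancel₀ (by positivity : 2 * r ≠ 0), one_mul,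
    mul_zero] using huy.const_mul (2 * r)⁻¹

theorem MLUR.weightedMLUR (h : MLUR X) {r : ℝ} (hr0 : 0 < r) (hr1 : r < 1) :
    WeightedMLUR X r := by
  rcases le_or_gt r (1 / 2) with hr | hr
  · exact h.weightedMLUR_of_le_half hr0 hr
  · simpa only [sub_sub_cancel] using
      (h.weightedMLUR_of_le_half (r := 1 - r) (by linarith) (by linarith)).one_sub

end

theorem mlur_iff_convex_combinations_general (X : Type*) [NormedAddCommGroup X]
    [NormedSpace ℝ X] :
    MLUR X ↔
      ∀ r : ℝ, 0 < r → r < 1 → ∀ (x y : ℕ → X) (z : X),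
        Tendsto (fun n => ‖x n‖) atTop (nhds 1) →
        Tendsto (fun n => ‖y n‖) atTop (nhds 1) →
        Tendsto (fun n => r • x n + (1 - r) • y n) atTop (nhds z) → ‖z‖ = 1 →
        Tendsto (fun n => ‖x n - y n‖) atTop (nhds 0) :=
  ⟨fun h _ hr0 hr1 => h.weightedMLUR hr0 hr1,
    fun h => weightedMLUR_half_iff.1 (h _ (by norm_num) (by norm_num))⟩

theorem mlur_iff_convex_combinations (X : Type*) [NormedAddCommGroup X]
    [NormedSpace ℝ X] [CompleteSpace X] :
    MLUR X ↔
      ∀ r : ℝ, 0 < r → r < 1 → ∀ (x y : ℕ → X) (z : X),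
        Tendsto (fun n => ‖x n‖) atTop (nhds 1) →
        Tendsto (fun n => ‖y n‖) atTop (nhds 1) →
        Tendsto (fun n => r • x n + (1 - r) • y n) atTop (nhds z) → ‖z‖ = 1 →
        Tendsto (fun n => ‖x n - y n‖) atTop (nhds 0) :=
  mlur_iff_convex_combinations_general X
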